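/- arXiv:1302.6672 — 2 statements merged into one kernel-verified Lean document; each statement's English description precedes it below -/
import Mathlib

section
/- Let ρ, T₀ > 0 be constants, let u : ℝ² → ℝ be C², and let T : ℝ² → ℝ be positive and differentiable in x. Suppose that for all (x,t): (i) ρ u_{tt} = ∂/∂x [ T(x,t) · u_x/√(1+u_x²) ] (vertical component of Newton's law); (ii) ∂/∂x [ T(x,t) · 1/√(1+u_x²) ] = 0 (horizontal component of Newton's law); and (iii) T(0,t) = T₀ √(1 + u_x(0,t)²). Then u satisfies exactly the linear wave equation u_{tt} = c² u_{xx} with c² = T₀/ρ. -/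
/-!
The horizontal balance says that `T cos θ = T / √(1 + u_x²)` is constant in `x`, and the boundary
condition fixes this constant to be `T₀`. Hence `T = T₀ √(1 + u_x²)`, so the vertical force density
`T sin θ = T u_x / √(1 + u_x²)` is exactly `T₀ u_x`, and the vertical balance becomes
`ρ u_tt = T₀ u_xx`.
-/

theorem sqrt_one_add_sq_ne_zero (a : ℝ) : √(1 + a ^ 2) ≠ 0 :=
  (Real.sqrt_pos.2 (by positivity)).ne'

theorem eq_mul_sqrt_one_add_sq_of_deriv_eq_zero {T v : ℝ → ℝ} {T₀ : ℝ}
    (hT : Differentiable ℝ T) (hv : Differentiable ℝ v)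
    (hhoriz : ∀ r, deriv (fun r => T r * (1 / √(1 + v r ^ 2))) r = 0)
    (h0 : T 0 = T₀ * √(1 + v 0 ^ 2)) (r : ℝ) :
    T r = T₀ * √(1 + v r ^ 2) := by
  have hcos : Differentiable ℝ (fun r => 1 / √(1 + v r ^ 2)) :=
    (differentiable_const 1).div
      (((differentiable_const 1).add (hv.pow 2)).sqrt fun r =>
        (by positivity : (0 : ℝ) < 1 + v r ^ 2).ne')
      fun r => sqrt_one_add_sq_ne_zero (v r)
  have hconst : T r * (1 / √(1 + v r ^ 2)) = T 0 * (1 / √(1 + v 0 ^ 2)) :=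
    is_const_of_deriv_eq_zero (hT.mul hcos) hhoriz r 0
  rw [h0] at hconst
  field_simp [sqrt_one_add_sq_ne_zero] at hconst
  rw [hconst, mul_comm]

theorem deriv_mul_div_sqrt_one_add_sq {T v : ℝ → ℝ} {T₀ : ℝ}
    (hT : ∀ r, T r = T₀ * √(1 + v r ^ 2)) (x : ℝ) :
    deriv (fun r => T r * (v r / √(1 + v r ^ 2))) x = T₀ * deriv v x := by
  have hflux : (fun r => T r * (v r / √(1 + v r ^ 2))) = fun r => T₀ * v r := by
    funext r
    rw [hT r]
    field_simp [sqrt_one_add_sq_ne_zero]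
  rw [hflux, deriv_const_mul_field']

theorem transverse_string_exactly_linear_wave_general
    (ρ T₀ : ℝ) (hρ : 0 < ρ)
    (u : ℝ × ℝ → ℝ) (hu : ContDiff ℝ 2 u)
    (T : ℝ × ℝ → ℝ)
    (hTdiff : ∀ x t : ℝ, DifferentiableAt ℝ (fun s => T (s, t)) x)
    (hvert : ∀ x t : ℝ,
      ρ * deriv (deriv (fun s => u (x, s))) t =
        deriv (fun r =>
          T (r, t) * (deriv (fun s => u (s, t)) r /
            Real.sqrt (1 + (deriv (fun s => u (s, t)) r) ^ 2))) x)
    (hhoriz : ∀ x t : ℝ,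
      deriv (fun r =>
        T (r, t) * (1 / Real.sqrt (1 + (deriv (fun s => u (s, t)) r) ^ 2))) x = 0)
    (hT0 : ∀ t : ℝ,
      T (0, t) = T₀ * Real.sqrt (1 + (deriv (fun s => u (s, t)) 0) ^ 2)) :
    ∀ x t : ℝ,
      deriv (deriv (fun s => u (x, s))) t =
        (T₀ / ρ) * deriv (deriv (fun s => u (s, t))) x := by
  intro x t
  have hv : Differentiable ℝ (deriv fun s => u (s, t)) :=
    (hu.comp (contDiff_id.prodMk contDiff_const)).differentiable_deriv_two
  have hT := eq_mul_sqrt_one_add_sq_of_deriv_eq_zero (fun r => hTdiff r t) hv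
    (fun r => hhoriz r t) (hT0 t)
  have hwave := hvert x t
  rw [deriv_mul_div_sqrt_one_add_sq hT] at hwave
  rw [div_mul_eq_mul_div, eq_div_iff hρ.ne', mul_comm, hwave]

/-- main 1-D result: if the vertical and horizontal components
of Newton's law hold, with tension normalized by `T(0,t) = T₀√(1+u_x(0,t)²)`,
then `u` satisfies exactly the linear wave equation `u_{tt} = (T₀/ρ) u_{xx}`. -/
theorem transverse_string_exactly_linear_wave
    (ρ T₀ : ℝ) (hρ : 0 < ρ) (hT₀ : 0 < T₀)
    (u : ℝ × ℝ → ℝ) (hu : ContDiff ℝ 2 u)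
    (T : ℝ × ℝ → ℝ) (hTpos : ∀ x t : ℝ, 0 < T (x, t))
    (hTdiff : ∀ x t : ℝ, DifferentiableAt ℝ (fun s => T (s, t)) x)
    (hvert : ∀ x t : ℝ,
      ρ * deriv (deriv (fun s => u (x, s))) t =
        deriv (fun r =>
          T (r, t) * (deriv (fun s => u (s, t)) r /
            Real.sqrt (1 + (deriv (fun s => u (s, t)) r) ^ 2))) x)
    (hhoriz : ∀ x t : ℝ,
      deriv (fun r =>
        T (r, t) * (1 / Real.sqrt (1 + (deriv (fun s => u (s, t)) r) ^ 2))) x = 0)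
    (hT0 : ∀ t : ℝ,
      T (0, t) = T₀ * Real.sqrt (1 + (deriv (fun s => u (s, t)) 0) ^ 2)) :
    ∀ x t : ℝ,
      deriv (deriv (fun s => u (x, s))) t =
        (T₀ / ρ) * deriv (deriv (fun s => u (s, t))) x :=
  transverse_string_exactly_linear_wave_general ρ T₀ hρ u hu T hTdiff hvert hhoriz hT0
end

section
/- Let a < b and let u : ℝ² → ℝ, (m,t) ↦ u(m,t), be C² and satisfy u_{tt} = u_{mm} everywhere, with boundary conditions u(a,t) = u(b,t) = 0 for all t and zero initial velocity u_t(m,0) = 0 for all m ∈ [a,b]. Then u is time-periodic on the strip with period 2(b−a): for all m ∈ [a,b] and all t ∈ ℝ, u(m, t + 2(b−a)) = u(m,t). -/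
/-!
The wave equation says that the mixed second derivative of `u` in the characteristic directions
`(1, 1)` and `(1, -1)` vanishes, so `u (m, t) = S (m + t) + R (m - t)` (d'Alembert). The boundary
condition at `a` expresses `R` as a reflection of `S`; with the one at `b`, `S` and `R` become
periodic, because the reflection in `a` followed by the reflection in `b` is the translation
by `2 (b - a)`.
-/

open Function

section

variable {E F : Type*} [NormedAddCommGroup E] [NormedSpace ℝ E]
  [NormedAddCommGroup F] [NormedSpace ℝ F]

theorem deriv_deriv_comp_eq_fderiv_fderiv {u : E → F} (hu : ContDiff ℝ 2 u) {γ : ℝ → E} {v : E}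
    (hγ : ∀ s, HasDerivAt γ v s) (t : ℝ) :
    deriv (deriv fun s => u (γ s)) t = fderiv ℝ (fderiv ℝ u) (γ t) v v := by
  have hu' : Differentiable ℝ (fderiv ℝ u) :=
    (hu.fderiv_right (m := 1) (by norm_num)).differentiable one_ne_zero
  have h_first : deriv (fun s => u (γ s)) = fun s => fderiv ℝ u (γ s) v := funext fun s =>
    ((hu.differentiable two_ne_zero (γ s)).hasFDerivAt.comp_hasDerivAt s (hγ s)).deriv
  rw [h_first]
  simpa using
    (((hu' (γ t)).hasFDerivAt.comp_hasDerivAt t (hγ t)).clm_apply (hasDerivAt_const t v)).deriv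

theorem apply_add_smul_eq_of_fderiv_apply_eq_zero {g : E → F} (hg : Differentiable ℝ g) {v : E}
    (h : ∀ p, fderiv ℝ g p v = 0) (p : E) (s : ℝ) : g (p + s • v) = g p := by
  have hline : ∀ s : ℝ, HasDerivAt (fun s : ℝ => p + s • v) v s := fun s => by
    simpa using ((hasDerivAt_id s).smul_const v).const_add p
  have hderiv : ∀ s : ℝ, HasDerivAt (fun s => g (p + s • v)) 0 s := fun s => by
    have hcomp := (hg _).hasFDerivAt.comp_hasDerivAt s (hline s)
    rwa [h] at hcomp
  simpa using is_const_of_deriv_eq_zero (fun s => (hderiv s).differentiableAt)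
    (fun s => (hderiv s).deriv) s 0

theorem fderiv_apply_add_smul_eq {u : E → F} (hu : ContDiff ℝ 2 u) {e f : E}
    (h : ∀ p, fderiv ℝ (fderiv ℝ u) p f e = 0) (p : E) (s : ℝ) :
    fderiv ℝ u (p + s • f) e = fderiv ℝ u p e := by
  have hu' : Differentiable ℝ (fderiv ℝ u) :=
    (hu.fderiv_right (m := 1) (by norm_num)).differentiable one_ne_zero
  refine apply_add_smul_eq_of_fderiv_apply_eq_zero (g := fun p => fderiv ℝ u p e)
    (fun p => (hu' p).clm_apply (differentiableAt_const e)) (fun q => ?_) p s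
  simpa [fderiv_clm_apply (hu' q) (differentiableAt_const e)] using h q

theorem sub_eq_sub_of_fderiv_apply_add_smul_eq {u : E → F} (hu : Differentiable ℝ u) {e f : E}
    (h : ∀ p (s : ℝ), fderiv ℝ u (p + s • f) e = fderiv ℝ u p e) (p : E) (x s : ℝ) :
    u (p + x • e + s • f) - u (p + x • e) = u (p + s • f) - u p := by
  refine apply_add_smul_eq_of_fderiv_apply_eq_zero (g := fun q => u (q + s • f) - u q)
    ((hu.comp (differentiable_id.add_const _)).sub hu) (fun q => ?_) p x
  rw [fderiv_fun_sub ((differentiableAt_comp_add_right _).2 (hu _)) (hu q),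
    fderiv_comp_add_right, _root_.sub_apply, h, sub_self]

theorem ContinuousLinearMap.apply_sub_apply_add (B : E →L[ℝ] E →L[ℝ] F)
    (hB : ∀ x y, B x y = B y x) (x y : E) : B (x - y) (x + y) = B x x - B y y := by
  simp only [map_sub, map_add, _root_.sub_apply, hB y x]
  abel

theorem exists_travelling_waves_of_wave_equation {u : ℝ × ℝ → F} (hu : ContDiff ℝ 2 u)
    (hwave : ∀ m t : ℝ,
      deriv (deriv fun s => u (m, s)) t = deriv (deriv fun r => u (r, t)) m) :
    ∃ S R : ℝ → F, ∀ m t, u (m, t) = S (m + t) + R (m - t) := by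
  have hchar : ∀ p, fderiv ℝ (fderiv ℝ u) p (1, -1) (1, 1) = 0 := by
    rintro ⟨m, t⟩
    have hwave' := hwave m t
    rw [deriv_deriv_comp_eq_fderiv_fderiv hu
        (fun s => (hasDerivAt_const s m).prodMk (hasDerivAt_id' s)),
      deriv_deriv_comp_eq_fderiv_fderiv hu
        (fun r => (hasDerivAt_id' r).prodMk (hasDerivAt_const r t))] at hwave'
    have hdirs : (((1 : ℝ), (-1 : ℝ)) : ℝ × ℝ) = (1, 0) - (0, 1) ∧
        (((1 : ℝ), (1 : ℝ)) : ℝ × ℝ) = (1, 0) + (0, 1) := by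
      simp
    -- by symmetry of the Hessian, this pairing is `u_mm - u_tt`
    rw [hdirs.1, hdirs.2, ContinuousLinearMap.apply_sub_apply_add _
      (hu.contDiffAt.isSymmSndFDerivAt (by simp)), sub_eq_zero]
    exact hwave'.symm
  have hsplit := sub_eq_sub_of_fderiv_apply_add_smul_eq (hu.differentiable two_ne_zero)
    (fderiv_apply_add_smul_eq hu hchar) 0
  refine ⟨fun z => u ((z / 2) • (1, 1)), fun z => u ((z / 2) • (1, -1)) - u 0, fun m t => ?_⟩
  have hmt : ((m, t) : ℝ × ℝ) = 0 + ((m + t) / 2) • (1, 1) + ((m - t) / 2) • (1, -1) := by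
    ext <;> simp <;> ring
  rw [hmt]
  simpa only [zero_add] using eq_add_of_sub_eq' (hsplit ((m + t) / 2) ((m - t) / 2))

end

theorem periodic_of_add_sub_eq_zero {G : Type*} [AddCommGroup G] {S R : ℝ → G} {a b : ℝ}
    (ha : ∀ t, S (a + t) + R (a - t) = 0) (hb : ∀ t, S (b + t) + R (b - t) = 0) :
    Periodic S (2 * (b - a)) ∧ Periodic R (2 * (b - a)) := by
  have hR : ∀ s, R s = -S (2 * a - s) := fun s => by
    have h := ha (a - s)
    rwa [show a + (a - s) = 2 * a - s by ring, sub_sub_cancel, add_comm,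
      add_eq_zero_iff_eq_neg] at h
  have hS : Periodic S (2 * (b - a)) := fun z => by
    have h := hb (z + b - 2 * a)
    rwa [hR, show b + (z + b - 2 * a) = z + 2 * (b - a) by ring,
      show 2 * a - (b - (z + b - 2 * a)) = z by ring, add_neg_eq_zero] at h
  refine ⟨hS, fun s => ?_⟩
  rw [hR, hR, show 2 * a - (s + 2 * (b - a)) = 2 * a - s - 2 * (b - a) by ring, hS.sub_eq]

theorem fixed_endpoint_wave_periodic_general
    (a b : ℝ)
    (u : ℝ × ℝ → ℝ) (hu : ContDiff ℝ 2 u)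
    (hwave : ∀ m t : ℝ,
      deriv (deriv (fun s => u (m, s))) t = deriv (deriv (fun r => u (r, t))) m)
    (hbdry : ∀ t : ℝ, u (a, t) = 0 ∧ u (b, t) = 0) :
    ∀ m ∈ Set.Icc a b, ∀ t : ℝ, u (m, t + 2 * (b - a)) = u (m, t) := by
  intro m _ t
  obtain ⟨S, R, hSR⟩ := exists_travelling_waves_of_wave_equation hu hwave
  obtain ⟨hS, hR⟩ := periodic_of_add_sub_eq_zero (fun t => hSR a t ▸ (hbdry t).1)
    (fun t => hSR b t ▸ (hbdry t).2)
  rw [hSR, hSR, ← add_assoc, hS, ← sub_sub, hR.sub_eq]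

/-- a C² solution of `u_{tt} = u_{mm}` on the strip
`[a,b] × ℝ` with fixed zero endpoints and zero initial velocity is
time-periodic with period `2(b−a)`. -/
theorem fixed_endpoint_wave_periodic
    (a b : ℝ) (hab : a < b)
    (u : ℝ × ℝ → ℝ) (hu : ContDiff ℝ 2 u)
    (hwave : ∀ m t : ℝ,
      deriv (deriv (fun s => u (m, s))) t = deriv (deriv (fun r => u (r, t))) m)
    (hbdry : ∀ t : ℝ, u (a, t) = 0 ∧ u (b, t) = 0)
    (hvel : ∀ m ∈ Set.Icc a b, deriv (fun s => u (m, s)) 0 = 0) :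
    ∀ m ∈ Set.Icc a b, ∀ t : ℝ, u (m, t + 2 * (b - a)) = u (m, t) :=
  fixed_endpoint_wave_periodic_general a b u hu hwave hbdry
end
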